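/- The coefficient of x^{n−1} in J_P(x, 1) = Σ_{a ∈ PB} x^{ι(a)} equals Σ_{i ∈ [n]} f({i}) − f([n]); equivalently, the number of bases a ∈ PB with ι(a) = n − 1 is Σ_{i ∈ [n]} f({i}) − f([n]). -/

import Mathlib

open Finset

variable {n : ℕ}

/-- The set of bases of the integer polymatroid with rank function `f` on ground set `Fin n`:
integer vectors `a` with `a i ≥ 0`, `∑_{i ∈ I} a i ≤ f I` for every `I`, and `∑ i, a i = f [n]`.
(The upper bound `a i ≤ f {i}` used for the ambient finite set is implied by the constraints.) -/
noncomputable def PB (n : ℕ) (f : Finset (Fin n) → ℕ) : Finset (Fin n → ℤ) :=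
  (Fintype.piFinset fun i : Fin n => Finset.Icc (0 : ℤ) (f {i})).filter fun a =>
    (∀ I : Finset (Fin n), ∑ j ∈ I, a j ≤ (f I : ℤ)) ∧ ∑ j, a j = (f Finset.univ : ℤ)

/-- A set `I` is tight for `a` if `∑_{i ∈ I} a i = f I`. -/
def Tight (f : Finset (Fin n) → ℕ) (a : Fin n → ℤ) (I : Finset (Fin n)) : Prop :=
  ∑ i ∈ I, a i = (f I : ℤ)

/-- `i` is internally active with respect to `a`: `a - e_i + e_j ∉ PB` for every `j < i`. -/
def IntAct (f : Finset (Fin n) → ℕ) (a : Fin n → ℤ) (i : Fin n) : Prop :=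
  ∀ j : Fin n, j < i → a - Pi.single i 1 + Pi.single j 1 ∉ PB n f

/-- `i` is externally active with respect to `a`: `a + e_i - e_j ∉ PB` for every `j < i`. -/
def ExtAct (f : Finset (Fin n) → ℕ) (a : Fin n → ℤ) (i : Fin n) : Prop :=
  ∀ j : Fin n, j < i → a + Pi.single i 1 - Pi.single j 1 ∉ PB n f

open scoped Classical in
/-- `Int(a)`: the set of internally active indices. -/
noncomputable def IntSet (f : Finset (Fin n) → ℕ) (a : Fin n → ℤ) : Finset (Fin n) :=
  Finset.univ.filter fun i => IntAct f a i

open scoped Classical in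
/-- `Ext(a)`: the set of externally active indices. -/
noncomputable def ExtSet (f : Finset (Fin n) → ℕ) (a : Fin n → ℤ) : Finset (Fin n) :=
  Finset.univ.filter fun i => ExtAct f a i

/-- `ι(a) = |Int(a)|`, the internal activity. -/
noncomputable def iota (f : Finset (Fin n) → ℕ) (a : Fin n → ℤ) : ℕ := (IntSet f a).card

/-- `ε(a) = |Ext(a)|`, the external activity. -/
noncomputable def eps (f : Finset (Fin n) → ℕ) (a : Fin n → ℤ) : ℕ := (ExtSet f a).card

/-!
The greedy basis `g j = f (Iic j) - f (Iio j)` has every index internally active. If all indices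
other than `i` are active in a basis `a`, then `a` is determined by `a i` (an exchange inside the
smallest tight set containing the first index where two such bases differ would make a later index
inactive), the prefix `Iic i` is tight, so `g i ≤ a i ≤ f {i}`, and each of these values is
attained by the greedy vector of a modified rank function. Index `i` is active in `a` exactly when
`a = g`, so the bases whose only inactive index is `i` number `f {i} - g i`; summing over `i` and
using `∑ g j = f univ` gives the claim.
-/

variable {f : Finset (Fin n) → ℕ} {a : Fin n → ℤ}

lemma mem_PB_iff :
    a ∈ PB n f ↔ (∀ j, 0 ≤ a j) ∧ (∀ I, ∑ j ∈ I, a j ≤ (f I : ℤ)) ∧ Tight f a univ := by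
  simp only [PB, mem_filter, Fintype.mem_piFinset, mem_Icc, Tight]
  refine ⟨fun ⟨h, hle, huniv⟩ => ⟨fun j => (h j).1, hle, huniv⟩,
    fun ⟨h, hle, huniv⟩ => ⟨fun j => ⟨h j, by simpa using hle {j}⟩, hle, huniv⟩⟩

lemma nonneg_of_mem_PB (ha : a ∈ PB n f) (j : Fin n) : 0 ≤ a j := (mem_PB_iff.1 ha).1 j

lemma sum_le_of_mem_PB (ha : a ∈ PB n f) (I : Finset (Fin n)) : ∑ j ∈ I, a j ≤ (f I : ℤ) :=
  (mem_PB_iff.1 ha).2.1 I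

lemma tight_univ_of_mem_PB (ha : a ∈ PB n f) : Tight f a univ := (mem_PB_iff.1 ha).2.2

lemma sum_sub_single_add_single (k j : Fin n) (T : Finset (Fin n)) :
    ∑ x ∈ T, (a - Pi.single k 1 + Pi.single j 1 : Fin n → ℤ) x =
      ∑ x ∈ T, a x - (if k ∈ T then 1 else 0) + (if j ∈ T then 1 else 0) := by
  simp only [Pi.add_apply, Pi.sub_apply, sum_add_distrib, sum_sub_distrib, sum_pi_single']

lemma sub_single_add_single_mem_PB_iff (ha : a ∈ PB n f) {j k : Fin n} (hjk : j ≠ k) :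
    a - Pi.single k 1 + Pi.single j 1 ∈ PB n f ↔
      0 < a k ∧ ∀ T, Tight f a T → j ∈ T → k ∈ T := by
  constructor
  · intro hb
    refine ⟨?_, fun T hT hjT => ?_⟩
    · have := nonneg_of_mem_PB hb k
      simp only [Pi.add_apply, Pi.sub_apply, Pi.single_eq_same, Pi.single_eq_of_ne hjk.symm]
        at this
      omega
    · by_contra hkT
      have := sum_le_of_mem_PB hb T
      rw [sum_sub_single_add_single, if_neg hkT, if_pos hjT, hT] at this
      omega
  · rintro ⟨hk, htight⟩
    refine mem_PB_iff.2 ⟨fun x => ?_, fun I => ?_, ?_⟩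
    · have := nonneg_of_mem_PB ha x
      simp only [Pi.add_apply, Pi.sub_apply, Pi.single_apply]
      split_ifs <;> subst_vars <;> omega
    · have hI := sum_le_of_mem_PB ha I
      rw [sum_sub_single_add_single]
      split_ifs with hkI hjI hjI
      · omega
      · omega
      · have hlt := lt_of_le_of_ne hI fun h => hkI (htight I h hjI)
        omega
      · omega
    · have := tight_univ_of_mem_PB ha
      unfold Tight at this ⊢
      rw [sum_sub_single_add_single, if_pos (mem_univ k), if_pos (mem_univ j)]
      omega

lemma Tight.union_inter (hsub : ∀ I J, f (I ∪ J) + f (I ∩ J) ≤ f I + f J)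
    (ha : a ∈ PB n f) {I J : Finset (Fin n)} (hI : Tight f a I) (hJ : Tight f a J) :
    Tight f a (I ∪ J) ∧ Tight f a (I ∩ J) := by
  have := sum_union_inter (s₁ := I) (s₂ := J) (f := a)
  have := sum_le_of_mem_PB ha (I ∪ J)
  have := sum_le_of_mem_PB ha (I ∩ J)
  have : (f (I ∪ J) : ℤ) + f (I ∩ J) ≤ f I + f J := by exact_mod_cast hsub I J
  unfold Tight at *
  constructor <;> omega

lemma tight_sup {ι : Type*} (hf0 : f ∅ = 0) (hsub : ∀ I J, f (I ∪ J) + f (I ∩ J) ≤ f I + f J)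
    (ha : a ∈ PB n f) {s : Finset ι} {T : ι → Finset (Fin n)} (hT : ∀ x ∈ s, Tight f a (T x)) :
    Tight f a (s.sup T) :=
  sup_induction (by simp [Tight, hf0]) (fun _ h₁ _ h₂ => (h₁.union_inter hsub ha h₂).1) hT

lemma tight_inf {ι : Type*} (hsub : ∀ I J, f (I ∪ J) + f (I ∩ J) ≤ f I + f J)
    (ha : a ∈ PB n f) {s : Finset ι} {T : ι → Finset (Fin n)} (hT : ∀ x ∈ s, Tight f a (T x)) :
    Tight f a (s.inf T) :=
  inf_induction (tight_univ_of_mem_PB ha) (fun _ h₁ _ h₂ => (h₁.union_inter hsub ha h₂).2) hT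

instance (f : Finset (Fin n) → ℕ) (a : Fin n → ℤ) : DecidablePred (Tight f a) :=
  fun _ => inferInstanceAs (Decidable (_ = _))

noncomputable def tightClosure (f : Finset (Fin n) → ℕ) (a : Fin n → ℤ) (S : Finset (Fin n)) :
    Finset (Fin n) :=
  (univ.filter fun T => Tight f a T ∧ S ⊆ T).inf id

lemma tight_tightClosure (hsub : ∀ I J, f (I ∪ J) + f (I ∩ J) ≤ f I + f J) (ha : a ∈ PB n f)
    (S : Finset (Fin n)) : Tight f a (tightClosure f a S) :=
  tight_inf hsub ha fun _ hT => (mem_filter.1 hT).2.1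

lemma subset_tightClosure (S : Finset (Fin n)) : S ⊆ tightClosure f a S :=
  Finset.le_inf fun _ hT => (mem_filter.1 hT).2.2

lemma tightClosure_subset {S T : Finset (Fin n)} (hT : Tight f a T) (hST : S ⊆ T) :
    tightClosure f a S ⊆ T :=
  inf_le (f := id) (mem_filter.2 ⟨mem_univ T, hT, hST⟩)

lemma exists_mem_tightClosure_singleton (hf0 : f ∅ = 0)
    (hsub : ∀ I J, f (I ∪ J) + f (I ∩ J) ≤ f I + f J) (ha : a ∈ PB n f)
    {S : Finset (Fin n)} {m : Fin n} (hm : m ∈ tightClosure f a S) :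
    ∃ j ∈ S, m ∈ tightClosure f a {j} := by
  have hU : tightClosure f a S ⊆ S.sup fun j => tightClosure f a {j} :=
    tightClosure_subset (tight_sup hf0 hsub ha fun j _ => tight_tightClosure hsub ha {j})
      fun j hj => mem_sup.2 ⟨j, hj, subset_tightClosure {j} (mem_singleton_self j)⟩
  exact mem_sup.1 (hU hm)

lemma intAct_of_tight (ha : a ∈ PB n f) {k : Fin n} {T : Finset (Fin n)} (hT : Tight f a T)
    (hkT : Iio k ⊆ T) (hk : k ∉ T) : IntAct f a k := fun _ hj hmem =>
  hk (((sub_single_add_single_mem_PB_iff ha hj.ne).1 hmem).2 T hT (hkT (mem_Iio.2 hj)))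

lemma not_intAct_of_mem_tightClosure (ha : a ∈ PB n f) {j k : Fin n} (hjk : j < k)
    (hk : 0 < a k) (hmem : k ∈ tightClosure f a {j}) : ¬IntAct f a k := fun hact =>
  hact j hjk <| (sub_single_add_single_mem_PB_iff ha hjk.ne).2
    ⟨hk, fun _ hT hjT => tightClosure_subset hT (singleton_subset_iff.2 hjT) hmem⟩

/-- Every index above `i` that is hit by the tight closure of `Iic i` is a zero of `a`, so this
closure has the same `a`-sum as `Iic i`; monotonicity then forces `Iic i` to be tight. -/
lemma tight_Iic_of_intAct (hf0 : f ∅ = 0) (hmono : ∀ I J, I ⊆ J → f I ≤ f J)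
    (hsub : ∀ I J, f (I ∪ J) + f (I ∩ J) ≤ f I + f J) (ha : a ∈ PB n f) {i : Fin n}
    (hact : ∀ m, i < m → IntAct f a m) : Tight f a (Iic i) := by
  set X := tightClosure f a (Iic i)
  have hzero : ∀ m ∈ X, m ∉ Iic i → a m = 0 := by
    intro m hmX hmi
    have him : i < m := by simpa using hmi
    by_contra hm
    have hpos : 0 < a m := lt_of_le_of_ne (nonneg_of_mem_PB ha m) (Ne.symm hm)
    obtain ⟨j, hj, hmj⟩ := exists_mem_tightClosure_singleton hf0 hsub ha hmX
    exact not_intAct_of_mem_tightClosure ha ((mem_Iic.1 hj).trans_lt him) hpos hmj (hact m him)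
  have hsum : ∑ j ∈ Iic i, a j = ∑ j ∈ X, a j := sum_subset (subset_tightClosure _) hzero
  have hX : Tight f a X := tight_tightClosure hsub ha _
  have hfX : (f (Iic i) : ℤ) ≤ f X := by exact_mod_cast hmono _ _ (subset_tightClosure _)
  unfold Tight at hX ⊢
  have := sum_le_of_mem_PB ha (Iic i)
  omega

lemma exists_ne_not_intAct (hsub : ∀ I J, f (I ∪ J) + f (I ∩ J) ≤ f I + f J)
    {b : Fin n → ℤ} (ha : a ∈ PB n f) (hb : b ∈ PB n f) {j : Fin n} (hj : a j < b j)
    (hagree : ∀ k < j, a k = b k) : ∃ k, a k ≠ b k ∧ ¬IntAct f a k := by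
  set D := tightClosure f a {j}
  have hjD : j ∈ D := subset_tightClosure _ (mem_singleton_self j)
  obtain ⟨k, hkD, hk⟩ : ∃ k ∈ D, b k < a k := by
    by_contra! hle
    have hlt : ∑ x ∈ D, a x < ∑ x ∈ D, b x := sum_lt_sum hle ⟨j, hjD, hj⟩
    have hD : Tight f a D := tight_tightClosure hsub ha _
    unfold Tight at hD
    linarith [sum_le_of_mem_PB hb D]
  have hjk : j < k := by
    rcases lt_trichotomy k j with h | rfl | h
    · exact absurd (hagree k h) hk.ne'
    · exact absurd hj hk.not_gt
    · exact h
  exact ⟨k, hk.ne', not_intAct_of_mem_tightClosure ha hjk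
    ((nonneg_of_mem_PB hb k).trans_lt hk) hkD⟩

lemma eq_of_intAct (hsub : ∀ I J, f (I ∪ J) + f (I ∩ J) ≤ f I + f J) {b : Fin n → ℤ}
    (ha : a ∈ PB n f) (hb : b ∈ PB n f) (hact : ∀ k, a k ≠ b k → IntAct f a k ∧ IntAct f b k) :
    a = b := by
  by_contra hne
  obtain ⟨j, hj, hmin⟩ := WellFounded.has_min wellFounded_lt {k | a k ≠ b k}
    (Function.ne_iff.1 hne)
  have hagree : ∀ k < j, a k = b k := fun k hk => not_not.1 fun h => hmin k h hk
  rcases lt_or_gt_of_ne hj with h | h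
  · obtain ⟨k, hne, hk⟩ := exists_ne_not_intAct hsub ha hb h hagree
    exact hk (hact k hne).1
  · obtain ⟨k, hne, hk⟩ := exists_ne_not_intAct hsub hb ha h fun k hk => (hagree k hk).symm
    exact hk (hact k hne.symm).2

def greedyVec (F : Finset (Fin n) → ℤ) (j : Fin n) : ℤ := F (Iic j) - F (Iio j)

lemma sum_greedyVec_of_isLowerSet {F : Finset (Fin n) → ℤ} (h0 : F ∅ = 0) {I : Finset (Fin n)}
    (hI : IsLowerSet (I : Set (Fin n))) : ∑ j ∈ I, greedyVec F j = F I := by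
  induction I using Finset.induction_on_max with
  | empty => simp [h0]
  | insert m s hlt ih =>
    have hs : s = Iio m := by
      ext x
      refine ⟨fun hx => mem_Iio.2 (hlt x hx), fun hx => ?_⟩
      have hx' := hI (mem_Iio.1 hx).le (mem_coe.2 (mem_insert_self m s))
      simpa [(mem_Iio.1 hx).ne] using hx'
    subst hs
    rw [sum_insert (by simp), ih (by simpa using isLowerSet_Iio m), Iio_insert,
      greedyVec]
    ring

lemma sum_greedyVec_Iio {F : Finset (Fin n) → ℤ} (h0 : F ∅ = 0) (j : Fin n) :
    ∑ x ∈ Iio j, greedyVec F x = F (Iio j) :=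
  sum_greedyVec_of_isLowerSet h0 (by simpa using isLowerSet_Iio j)

lemma sum_greedyVec_le {F : Finset (Fin n) → ℤ} (h0 : F ∅ = 0)
    (hsub : ∀ I J, F (I ∪ J) + F (I ∩ J) ≤ F I + F J) (I : Finset (Fin n)) :
    ∑ j ∈ I, greedyVec F j ≤ F I := by
  induction I using Finset.induction_on_max with
  | empty => simp [h0]
  | insert m s hlt ih =>
    have hs : s ⊆ Iio m := fun x hx => mem_Iio.2 (hlt x hx)
    have hunion : Iio m ∪ insert m s = Iic m := by
      rw [union_insert, union_eq_left.2 hs, Iio_insert]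
    have hinter : Iio m ∩ insert m s = s := by
      rw [inter_insert_of_notMem (by simp), inter_eq_right.2 hs]
    have := hsub (Iio m) (insert m s)
    rw [hunion, hinter] at this
    rw [sum_insert fun hm => lt_irrefl m (hlt m hm), greedyVec]
    linarith

lemma greedyVec_mem_PB {F : Finset (Fin n) → ℤ} (h0 : F ∅ = 0) (hmono : Monotone F)
    (hsub : ∀ I J, F (I ∪ J) + F (I ∩ J) ≤ F I + F J) (hle : ∀ I, F I ≤ f I)
    (huniv : F univ = f univ) : greedyVec F ∈ PB n f := by
  refine mem_PB_iff.2 ⟨fun j => ?_, fun I => (sum_greedyVec_le h0 hsub I).trans (hle I), ?_⟩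
  · have := hmono (Iio_subset_Iic_self (a := j))
    simp only [greedyVec]
    omega
  · simp only [Tight]
    rw [sum_greedyVec_of_isLowerSet h0 (by simpa using isLowerSet_univ), huniv]

def greedyBasis (f : Finset (Fin n) → ℕ) : Fin n → ℤ := greedyVec fun S => (f S : ℤ)

lemma greedyBasis_mem_PB (hf0 : f ∅ = 0) (hmono : ∀ I J, I ⊆ J → f I ≤ f J)
    (hsub : ∀ I J, f (I ∪ J) + f (I ∩ J) ≤ f I + f J) : greedyBasis f ∈ PB n f :=
  greedyVec_mem_PB (by simp [hf0]) (fun I J h => by exact_mod_cast hmono I J h)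
    (fun I J => by exact_mod_cast hsub I J) (fun _ => le_rfl) rfl

lemma intAct_greedyBasis (hf0 : f ∅ = 0) (hmono : ∀ I J, I ⊆ J → f I ≤ f J)
    (hsub : ∀ I J, f (I ∪ J) + f (I ∩ J) ≤ f I + f J) (k : Fin n) :
    IntAct f (greedyBasis f) k :=
  intAct_of_tight (greedyBasis_mem_PB hf0 hmono hsub) (sum_greedyVec_Iio (by simp [hf0]) k)
    subset_rfl (by simp)

lemma sum_greedyBasis (hf0 : f ∅ = 0) (hmono : ∀ I J, I ⊆ J → f I ≤ f J)
    (hsub : ∀ I J, f (I ∪ J) + f (I ∩ J) ≤ f I + f J) :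
    ∑ i, greedyBasis f i = f univ :=
  tight_univ_of_mem_PB (greedyBasis_mem_PB hf0 hmono hsub)

lemma greedyBasis_le_apply (hf0 : f ∅ = 0) (hmono : ∀ I J, I ⊆ J → f I ≤ f J)
    (hsub : ∀ I J, f (I ∪ J) + f (I ∩ J) ≤ f I + f J) (ha : a ∈ PB n f) {i : Fin n}
    (hact : ∀ m, i < m → IntAct f a m) : greedyBasis f i ≤ a i := by
  have htight := tight_Iic_of_intAct hf0 hmono hsub ha hact
  rw [Tight, ← Iio_insert, sum_insert (by simp)] at htight
  have := sum_le_of_mem_PB ha (Iio i)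
  simp only [greedyBasis, greedyVec, ← Iio_insert]
  omega

/-- For `v ≤ f {i}` this is `S ↦ max {x S | x ∈ P, v ≤ x i}`, whose greedy vector is a basis
with `i`-th coordinate `v` as soon as `greedyBasis f i ≤ v`. -/
def rankWithLowerBound (f : Finset (Fin n) → ℕ) (i : Fin n) (v : ℤ) (S : Finset (Fin n)) : ℤ :=
  if i ∈ S then f S else min (f S : ℤ) (f (insert i S) - v)

section rankWithLowerBound

variable {i : Fin n} {v : ℤ}

lemma rankWithLowerBound_of_mem {S : Finset (Fin n)} (h : i ∈ S) :
    rankWithLowerBound f i v S = f S := if_pos h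

lemma rankWithLowerBound_of_notMem {S : Finset (Fin n)} (h : i ∉ S) :
    rankWithLowerBound f i v S = min (f S : ℤ) (f (insert i S) - v) := if_neg h

lemma rankWithLowerBound_empty (hf0 : f ∅ = 0) (hv : v ≤ f {i}) :
    rankWithLowerBound f i v ∅ = 0 := by
  rw [rankWithLowerBound_of_notMem (notMem_empty i), insert_empty, hf0]
  omega

lemma rankWithLowerBound_le (S : Finset (Fin n)) : rankWithLowerBound f i v S ≤ f S := by
  unfold rankWithLowerBound
  split_ifs <;> omega

lemma rankWithLowerBound_mono (hmono : ∀ I J, I ⊆ J → f I ≤ f J) :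
    Monotone (rankWithLowerBound f i v) := by
  intro A B h
  have h₁ : (f A : ℤ) ≤ f B := by exact_mod_cast hmono _ _ h
  have h₂ : (f (insert i A) : ℤ) ≤ f (insert i B) := by
    exact_mod_cast hmono _ _ (insert_subset_insert i h)
  unfold rankWithLowerBound
  split_ifs with hA hB
  all_goals first | omega | exact absurd (h hA) hB

lemma rankWithLowerBound_submod (hsub : ∀ I J, f (I ∪ J) + f (I ∩ J) ≤ f I + f J)
    (A B : Finset (Fin n)) :
    rankWithLowerBound f i v (A ∪ B) + rankWithLowerBound f i v (A ∩ B) ≤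
      rankWithLowerBound f i v A + rankWithLowerBound f i v B := by
  have s₁ : (f (A ∪ B) : ℤ) + f (A ∩ B) ≤ f A + f B := by exact_mod_cast hsub A B
  have s₂ : (f (insert i (A ∪ B)) : ℤ) + f (A ∩ insert i B) ≤ f A + f (insert i B) := by
    rw [← union_insert]; exact_mod_cast hsub A (insert i B)
  have s₃ : (f (insert i (A ∪ B)) : ℤ) + f (insert i A ∩ B) ≤ f (insert i A) + f B := by
    rw [← insert_union]; exact_mod_cast hsub (insert i A) B
  have s₄ : (f (insert i (A ∪ B)) : ℤ) + f (insert i (A ∩ B)) ≤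
      f (insert i A) + f (insert i B) := by
    rw [insert_union_distrib, insert_inter_distrib]; exact_mod_cast hsub _ _
  by_cases hA : i ∈ A <;> by_cases hB : i ∈ B
  · rw [rankWithLowerBound_of_mem hA, rankWithLowerBound_of_mem hB,
      rankWithLowerBound_of_mem (mem_union_left _ hA),
      rankWithLowerBound_of_mem (mem_inter.2 ⟨hA, hB⟩)]
    exact s₁
  · rw [rankWithLowerBound_of_mem hA, rankWithLowerBound_of_notMem hB,
      rankWithLowerBound_of_mem (mem_union_left _ hA),
      rankWithLowerBound_of_notMem fun h => hB (mem_inter.1 h).2]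
    rw [inter_insert_of_mem hA, insert_eq_of_mem (mem_union_left _ hA)] at s₂
    omega
  · rw [rankWithLowerBound_of_notMem hA, rankWithLowerBound_of_mem hB,
      rankWithLowerBound_of_mem (mem_union_right _ hB),
      rankWithLowerBound_of_notMem fun h => hA (mem_inter.1 h).1]
    rw [insert_inter_of_mem hB, insert_eq_of_mem (mem_union_right _ hB)] at s₃
    omega
  · rw [rankWithLowerBound_of_notMem hA, rankWithLowerBound_of_notMem hB,
      rankWithLowerBound_of_notMem fun h => (mem_union.1 h).elim hA hB,
      rankWithLowerBound_of_notMem fun h => hA (mem_inter.1 h).1]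
    rw [inter_insert_of_notMem hA] at s₂
    rw [insert_inter_of_notMem hB] at s₃
    omega

lemma greedyVec_rankWithLowerBound_self (hv : greedyBasis f i ≤ v) :
    greedyVec (rankWithLowerBound f i v) i = v := by
  rw [greedyVec, rankWithLowerBound_of_mem (mem_Iic.2 le_rfl),
    rankWithLowerBound_of_notMem (by simp), Iio_insert]
  simp only [greedyBasis, greedyVec] at hv
  omega

end rankWithLowerBound

lemma exists_mem_PB_apply_eq (hf0 : f ∅ = 0) (hmono : ∀ I J, I ⊆ J → f I ≤ f J)
    (hsub : ∀ I J, f (I ∪ J) + f (I ∩ J) ≤ f I + f J) {i : Fin n} {v : ℤ}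
    (hgv : greedyBasis f i ≤ v) (hvf : v ≤ f {i}) :
    ∃ a ∈ PB n f, a i = v ∧ ∀ j ≠ i, IntAct f a j := by
  have h0 : rankWithLowerBound f i v ∅ = 0 := rankWithLowerBound_empty hf0 hvf
  have ha : greedyVec (rankWithLowerBound f i v) ∈ PB n f :=
    greedyVec_mem_PB h0 (rankWithLowerBound_mono hmono) (rankWithLowerBound_submod hsub)
      rankWithLowerBound_le (rankWithLowerBound_of_mem (mem_univ i))
  refine ⟨_, ha, greedyVec_rankWithLowerBound_self hgv, fun j hji => ?_⟩
  rcases hji.lt_or_gt with hj | hj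
  · have hi : i ∉ Iio j := by simpa using hj.le
    rcases min_choice (f (Iio j) : ℤ) (f (insert i (Iio j)) - v) with h | h
    · refine intAct_of_tight ha ?_ subset_rfl (by simp)
      rw [Tight, sum_greedyVec_Iio h0, rankWithLowerBound_of_notMem hi, h]
    · refine intAct_of_tight ha (T := insert i (Iio j)) ?_ (subset_insert _ _) (by simp [hji])
      rw [Tight, sum_insert hi, sum_greedyVec_Iio h0, rankWithLowerBound_of_notMem hi, h,
        greedyVec_rankWithLowerBound_self hgv]
      ring
  · refine intAct_of_tight ha ?_ subset_rfl (by simp)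
    rw [Tight, sum_greedyVec_Iio h0, rankWithLowerBound_of_mem (mem_Iio.2 hj)]

lemma iota_eq_sub_one_iff (hn : 0 < n) :
    iota f a = n - 1 ↔ ∃ i, ∀ j, IntAct f a j ↔ j ≠ i := by
  have hcompl : #(IntSet f a)ᶜ = n - iota f a := by simp [card_compl, iota]
  have hle : iota f a ≤ n := by simpa [iota] using card_le_univ (IntSet f a)
  have hiff : iota f a = n - 1 ↔ #(IntSet f a)ᶜ = 1 := by omega
  simp only [hiff, card_eq_one, Finset.ext_iff, mem_compl, mem_singleton, IntSet, mem_filter,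
    mem_univ, true_and]
  exact exists_congr fun _ => forall_congr' fun _ => not_iff_comm.trans Iff.comm

open scoped Classical in
noncomputable def basesInactiveOnlyAt (f : Finset (Fin n) → ℕ) (i : Fin n) :
    Finset (Fin n → ℤ) :=
  (PB n f).filter fun a => ∀ j, IntAct f a j ↔ j ≠ i

lemma filter_iota_eq_biUnion (hn : 0 < n) :
    (PB n f).filter (fun a => iota f a = n - 1) = univ.biUnion (basesInactiveOnlyAt f) := by
  ext a
  simp [basesInactiveOnlyAt, iota_eq_sub_one_iff hn]

lemma pairwiseDisjoint_basesInactiveOnlyAt :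
    ((univ : Finset (Fin n)) : Set (Fin n)).PairwiseDisjoint (basesInactiveOnlyAt f) := by
  intro i _ j _ hij
  refine disjoint_left.2 fun a hai haj => ?_
  simp only [basesInactiveOnlyAt, mem_filter] at hai haj
  exact hij ((not_not.1 (mt (hai.2 j).2 (by simpa using haj.2 j)))).symm

lemma intAct_iff_apply_eq_greedyBasis (hf0 : f ∅ = 0) (hmono : ∀ I J, I ⊆ J → f I ≤ f J)
    (hsub : ∀ I J, f (I ∪ J) + f (I ∩ J) ≤ f I + f J) (ha : a ∈ PB n f) {i : Fin n}
    (hact : ∀ j ≠ i, IntAct f a j) : IntAct f a i ↔ a i = greedyBasis f i := by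
  have hg := greedyBasis_mem_PB hf0 hmono hsub
  have hgact := intAct_greedyBasis hf0 hmono hsub
  constructor
  · intro hi
    have hall : ∀ j, IntAct f a j := fun j => (eq_or_ne j i).elim (· ▸ hi) (hact j)
    rw [eq_of_intAct hsub ha hg fun k _ => ⟨hall k, hgact k⟩]
  · intro hi
    rw [eq_of_intAct hsub ha hg fun k hk => ⟨hact k (by rintro rfl; exact hk hi), hgact k⟩]
    exact hgact i

/-- The coordinate `a ↦ a i` is a bijection onto `Ioc (greedyBasis f i) (f {i})`. -/
lemma card_basesInactiveOnlyAt (hf0 : f ∅ = 0) (hmono : ∀ I J, I ⊆ J → f I ≤ f J)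
    (hsub : ∀ I J, f (I ∪ J) + f (I ∩ J) ≤ f I + f J) (i : Fin n) :
    (#(basesInactiveOnlyAt f i) : ℤ) = f {i} - greedyBasis f i := by
  have hmem : ∀ a, a ∈ basesInactiveOnlyAt f i ↔
      a ∈ PB n f ∧ (∀ j ≠ i, IntAct f a j) ∧ ¬IntAct f a i := by
    intro a
    simp only [basesInactiveOnlyAt, mem_filter]
    exact and_congr_right fun _ => ⟨fun h => ⟨fun j => (h j).2, fun hi => (h i).1 hi rfl⟩,
      fun ⟨hact, hi⟩ j => ⟨fun hj hji => hi (hji ▸ hj), hact j⟩⟩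
  have hcard : #(basesInactiveOnlyAt f i) = #(Ioc (greedyBasis f i) (f {i})) := by
    refine card_bij (fun a _ => a i) (fun a ha => ?_) (fun a ha b hb hab => ?_) fun v hv => ?_
    · obtain ⟨ha, hact, hi⟩ := (hmem a).1 ha
      have hle := greedyBasis_le_apply hf0 hmono hsub ha fun m hm => hact m hm.ne'
      have hne := mt (intAct_iff_apply_eq_greedyBasis hf0 hmono hsub ha hact).2 hi
      exact mem_Ioc.2 ⟨lt_of_le_of_ne hle (Ne.symm hne), by simpa using sum_le_of_mem_PB ha {i}⟩
    · obtain ⟨ha, hacta, -⟩ := (hmem a).1 ha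
      obtain ⟨hb, hactb, -⟩ := (hmem b).1 hb
      exact eq_of_intAct hsub ha hb fun k hk =>
        have hki : k ≠ i := by rintro rfl; exact hk hab
        ⟨hacta k hki, hactb k hki⟩
    · obtain ⟨hgv, hvf⟩ := mem_Ioc.1 hv
      obtain ⟨a, ha, hai, hact⟩ := exists_mem_PB_apply_eq hf0 hmono hsub hgv.le hvf
      refine ⟨a, (hmem a).2 ⟨ha, hact, fun hi => ?_⟩, hai⟩
      have := (intAct_iff_apply_eq_greedyBasis hf0 hmono hsub ha hact).1 hi
      omega
  have hgi : greedyBasis f i ≤ f {i} := by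
    simpa using sum_le_of_mem_PB (greedyBasis_mem_PB hf0 hmono hsub) {i}
  rw [hcard, Int.card_Ioc, Int.toNat_of_nonneg (by omega)]

open scoped Classical in
/-- The coefficient of `x^(n-1)` in `J_P(x,1)`, i.e. the number of bases with
`ι(a) = n - 1`, equals `Σ_i f({i}) - f([n])`. -/
theorem coeff_subtop_int
    (n : ℕ) (hn : 0 < n) (f : Finset (Fin n) → ℕ)
    (hf0 : f ∅ = 0)
    (hmono : ∀ I J : Finset (Fin n), I ⊆ J → f I ≤ f J)
    (hsub : ∀ I J : Finset (Fin n), f (I ∪ J) + f (I ∩ J) ≤ f I + f J) :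
    (((PB n f).filter fun a => iota f a = n - 1).card : ℤ) =
      (∑ i : Fin n, (f {i} : ℤ)) - (f Finset.univ : ℤ) := by
  rw [filter_iota_eq_biUnion hn, card_biUnion pairwiseDisjoint_basesInactiveOnlyAt]
  push_cast
  rw [sum_congr rfl fun i _ => card_basesInactiveOnlyAt hf0 hmono hsub i, sum_sub_distrib,
    sum_greedyBasis hf0 hmono hsub]
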